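/- (Nontrivial lower bound via consistency) Suppose the graph is connected, (C,C̄) is consistent with λ = NCut(C,C̄), and γ > gvol(V)·λ/4. Then any subset A with F̂_γ(A) ≤ λ must be consistent (violate no constraints), and F̂_γ(A) = NCut(A,Ā). -/

import Mathlib

open Finset

/-- cut(C, C̄) = 2 ∑_{i∈C, j∈C̄} w_{ij} -/
noncomputable def cutW {n : ℕ} (w : Fin n → Fin n → ℝ) (C : Finset (Fin n)) : ℝ :=
  2 * ∑ i ∈ C, ∑ j ∈ Cᶜ, w i j

/-- generalized volume gvol(C) = ∑_{i∈C} b_i -/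
noncomputable def gvol {n : ℕ} (b : Fin n → ℝ) (C : Finset (Fin n)) : ℝ := ∑ i ∈ C, b i

/-- bal(C) = 2 gvol(C) gvol(C̄) / gvol(V) -/
noncomputable def bal {n : ℕ} (b : Fin n → ℝ) (C : Finset (Fin n)) : ℝ :=
  2 * gvol b C * gvol b Cᶜ / gvol b Finset.univ

/-- NCut(C,C̄) = cut(C,C̄)/bal(C) -/
noncomputable def ncut {n : ℕ} (w : Fin n → Fin n → ℝ) (b : Fin n → ℝ) (C : Finset (Fin n)) : ℝ :=
  cutW w C / bal b C

/-- M̂(C) = 2 ∑_{i∈C, j∈C̄} q^m_{ij}, twice the number of violated must-links -/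
noncomputable def Mhat {n : ℕ} (qm : Fin n → Fin n → ℝ) (C : Finset (Fin n)) : ℝ :=
  2 * ∑ i ∈ C, ∑ j ∈ Cᶜ, qm i j

/-- N̂(C) = ∑_{i,j∈C} q^c_{ij} + ∑_{i,j∈C̄} q^c_{ij}, twice the number of violated cannot-links -/
noncomputable def Nhat {n : ℕ} (qc : Fin n → Fin n → ℝ) (C : Finset (Fin n)) : ℝ :=
  (∑ i ∈ C, ∑ j ∈ C, qc i j) + ∑ i ∈ Cᶜ, ∑ j ∈ Cᶜ, qc i j

/-- F̂_γ(C) = (cut(C,C̄) + γ(M̂(C)+N̂(C))) / bal(C) -/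
noncomputable def Fhat {n : ℕ} (w : Fin n → Fin n → ℝ) (b : Fin n → ℝ)
    (qm qc : Fin n → Fin n → ℝ) (γ : ℝ) (C : Finset (Fin n)) : ℝ :=
  (cutW w C + γ * (Mhat qm C + Nhat qc C)) / bal b C

/-!
Each violated must-link contributes `2` to `M̂`, and each violated cannot-link contributes `2`
to `N̂` (consistency of `C` rules out self cannot-links, so the pair `(i, j), (j, i)` is
genuine). Hence an inconsistent `A` has penalty `M̂(A) + N̂(A) ≥ 2`, and since
`bal(A) ≤ gvol(V)/2`, `F̂_γ(A) ≥ NCut(A) + 4γ/gvol(V) > 4γ/gvol(V) > λ`.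
-/

section ZeroOne

variable {α : Type*} {q : α → α → ℝ}

theorem le_sum_sum_of_nonneg (hq : ∀ i j, 0 ≤ q i j) {S T : Finset α} {i j : α}
    (hi : i ∈ S) (hj : j ∈ T) : q i j ≤ ∑ a ∈ S, ∑ c ∈ T, q a c :=
  (single_le_sum (fun c _ => hq i c) hj).trans
    (single_le_sum (f := fun a => ∑ c ∈ T, q a c) (fun a _ => sum_nonneg fun c _ => hq a c) hi)

variable (hq : ∀ i j, q i j = 0 ∨ q i j = 1)
include hq

theorem nonneg_of_eq_zero_or_eq_one (i j : α) : 0 ≤ q i j :=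
  (hq i j).elim (·.ge) fun h => h ▸ zero_le_one

theorem sum_sum_nonneg_of_eq_zero_or_eq_one (S T : Finset α) : 0 ≤ ∑ i ∈ S, ∑ j ∈ T, q i j :=
  sum_nonneg fun i _ => sum_nonneg fun j _ => nonneg_of_eq_zero_or_eq_one hq i j

theorem sum_sum_eq_zero_or_exists_eq_one (S T : Finset α) :
    ∑ i ∈ S, ∑ j ∈ T, q i j = 0 ∨ ∃ i ∈ S, ∃ j ∈ T, q i j = 1 := by
  by_cases h : ∃ i ∈ S, ∃ j ∈ T, q i j = 1
  · exact Or.inr h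
  · push Not at h
    exact Or.inl <| sum_eq_zero fun i hi => sum_eq_zero fun j hj =>
      (hq i j).resolve_right (h i hi j hj)

theorem sum_sum_eq_zero_or_one_le (S T : Finset α) :
    ∑ i ∈ S, ∑ j ∈ T, q i j = 0 ∨ 1 ≤ ∑ i ∈ S, ∑ j ∈ T, q i j := by
  refine (sum_sum_eq_zero_or_exists_eq_one hq S T).imp_right ?_
  rintro ⟨i, hi, j, hj, hij⟩
  exact hij ▸ le_sum_sum_of_nonneg (nonneg_of_eq_zero_or_eq_one hq) hi hj

/-- A symmetric link with zero diagonal is counted once as `(i, j)` and once as `(j, i)`. -/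
theorem sum_sum_eq_zero_or_two_le [DecidableEq α] (hsymm : ∀ i j, q i j = q j i)
    (hdiag : ∀ i, q i i = 0) (S : Finset α) :
    ∑ i ∈ S, ∑ j ∈ S, q i j = 0 ∨ 2 ≤ ∑ i ∈ S, ∑ j ∈ S, q i j := by
  refine (sum_sum_eq_zero_or_exists_eq_one hq S S).imp_right ?_
  rintro ⟨i, hi, j, hj, hij⟩
  have hne : i ≠ j := by rintro rfl; simp [hdiag] at hij
  have hpair : ({(i, j), (j, i)} : Finset (α × α)) ⊆ S ×ˢ S := by
    simp [insert_subset_iff, hi, hj]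
  rw [← sum_product']
  calc (2 : ℝ) = ∑ p ∈ ({(i, j), (j, i)} : Finset (α × α)), q p.1 p.2 := by
        rw [sum_pair (by simp [hne])]
        dsimp only
        rw [hsymm j i, hij]
        norm_num
    _ ≤ ∑ p ∈ S ×ˢ S, q p.1 p.2 :=
        sum_le_sum_of_subset_of_nonneg hpair fun p _ _ => nonneg_of_eq_zero_or_eq_one hq _ _

end ZeroOne

section Penalty

variable {n : ℕ} {qm qc : Fin n → Fin n → ℝ}

theorem Mhat_nonneg (hqm : ∀ i j, qm i j = 0 ∨ qm i j = 1) (C : Finset (Fin n)) :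
    0 ≤ Mhat qm C :=
  mul_nonneg zero_le_two (sum_sum_nonneg_of_eq_zero_or_eq_one hqm C Cᶜ)

theorem Nhat_nonneg (hqc : ∀ i j, qc i j = 0 ∨ qc i j = 1) (C : Finset (Fin n)) :
    0 ≤ Nhat qc C :=
  add_nonneg (sum_sum_nonneg_of_eq_zero_or_eq_one hqc C C)
    (sum_sum_nonneg_of_eq_zero_or_eq_one hqc Cᶜ Cᶜ)

theorem Mhat_eq_zero_or_two_le (hqm : ∀ i j, qm i j = 0 ∨ qm i j = 1) (C : Finset (Fin n)) :
    Mhat qm C = 0 ∨ 2 ≤ Mhat qm C := by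
  unfold Mhat
  rcases sum_sum_eq_zero_or_one_le hqm C Cᶜ with h | h
  · exact Or.inl (by rw [h, mul_zero])
  · exact Or.inr (by linarith)

theorem Nhat_eq_zero_or_two_le (hqc : ∀ i j, qc i j = 0 ∨ qc i j = 1)
    (hsymm : ∀ i j, qc i j = qc j i) (hdiag : ∀ i, qc i i = 0) (C : Finset (Fin n)) :
    Nhat qc C = 0 ∨ 2 ≤ Nhat qc C := by
  unfold Nhat
  have hC := sum_sum_nonneg_of_eq_zero_or_eq_one hqc C C
  have hCc := sum_sum_nonneg_of_eq_zero_or_eq_one hqc Cᶜ Cᶜ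
  rcases sum_sum_eq_zero_or_two_le hqc hsymm hdiag C with h | h <;>
    rcases sum_sum_eq_zero_or_two_le hqc hsymm hdiag Cᶜ with h' | h'
  · exact Or.inl (by rw [h, h', add_zero])
  all_goals exact Or.inr (by linarith)

/-- A self cannot-link `qc i i = 1` is violated by every partition. -/
theorem diag_eq_zero_of_Nhat_eq_zero (hqc : ∀ i j, qc i j = 0 ∨ qc i j = 1)
    {C : Finset (Fin n)} (hC : Nhat qc C = 0) (i : Fin n) : qc i i = 0 := by
  refine (hqc i i).resolve_right fun h1 => ?_
  have hnn := nonneg_of_eq_zero_or_eq_one hqc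
  have hC₀ := sum_sum_nonneg_of_eq_zero_or_eq_one hqc C C
  have hCc₀ := sum_sum_nonneg_of_eq_zero_or_eq_one hqc Cᶜ Cᶜ
  unfold Nhat at hC
  by_cases hi : i ∈ C
  · linarith [h1 ▸ le_sum_sum_of_nonneg hnn hi hi]
  · have hi' : i ∈ Cᶜ := mem_compl.2 hi
    linarith [h1 ▸ le_sum_sum_of_nonneg hnn hi' hi']

theorem Mhat_add_Nhat_eq_zero_or_two_le (hqm : ∀ i j, qm i j = 0 ∨ qm i j = 1)
    (hqc : ∀ i j, qc i j = 0 ∨ qc i j = 1) (hsymm : ∀ i j, qc i j = qc j i)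
    (hdiag : ∀ i, qc i i = 0) (C : Finset (Fin n)) :
    Mhat qm C + Nhat qc C = 0 ∨ 2 ≤ Mhat qm C + Nhat qc C := by
  have hM := Mhat_nonneg hqm C
  have hN := Nhat_nonneg hqc C
  rcases Mhat_eq_zero_or_two_le hqm C with h | h <;>
    rcases Nhat_eq_zero_or_two_le hqc hsymm hdiag C with h' | h'
  · exact Or.inl (by rw [h, h', add_zero])
  all_goals exact Or.inr (by linarith)

end Penalty

section Balance

variable {n : ℕ} {b : Fin n → ℝ}

theorem gvol_pos (hb : ∀ i, 0 < b i) {S : Finset (Fin n)} (hS : S.Nonempty) : 0 < gvol b S :=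
  sum_pos (fun i _ => hb i) hS

theorem bal_pos (hb : ∀ i, 0 < b i) {S : Finset (Fin n)} (hS₁ : S ≠ ∅) (hS₂ : S ≠ univ) :
    0 < bal b S := by
  have hS : S.Nonempty := nonempty_iff_ne_empty.2 hS₁
  have hSc : Sᶜ.Nonempty := nonempty_iff_ne_empty.2 <| (compl_eq_empty_iff S).not.2 hS₂
  exact div_pos (mul_pos (mul_pos two_pos (gvol_pos hb hS)) (gvol_pos hb hSc))
    (gvol_pos hb (hS.mono (subset_univ S)))

/-- `bal` is a harmonic mean of `gvol S` and `gvol Sᶜ`, hence at most their arithmetic mean. -/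
theorem bal_le_half_gvol_univ (hb : ∀ i, 0 ≤ b i) (S : Finset (Fin n)) :
    bal b S ≤ gvol b univ / 2 := by
  have hV : gvol b S + gvol b Sᶜ = gvol b univ := sum_add_sum_compl S b
  have hV₀ : 0 ≤ gvol b univ := sum_nonneg fun i _ => hb i
  rcases hV₀.eq_or_lt with h0 | hpos
  · simp [bal, ← h0]
  · rw [bal, div_le_div_iff₀ hpos two_pos, ← hV]
    nlinarith [sq_nonneg (gvol b S - gvol b Sᶜ)]

end Balance

section Objective

variable {n : ℕ} {w : Fin n → Fin n → ℝ} {b : Fin n → ℝ} {qm qc : Fin n → Fin n → ℝ} {γ : ℝ}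

theorem Fhat_eq_ncut_add (C : Finset (Fin n)) :
    Fhat w b qm qc γ C = ncut w b C + γ * (Mhat qm C + Nhat qc C) / bal b C :=
  add_div _ _ _

theorem ncut_add_le_Fhat (hb : ∀ i, 0 ≤ b i) {A : Finset (Fin n)} (hbal : 0 < bal b A)
    (hγ : 0 ≤ γ) (hP : 2 ≤ Mhat qm A + Nhat qc A) :
    ncut w b A + 4 * γ / gvol b univ ≤ Fhat w b qm qc γ A := by
  have hhalf := bal_le_half_gvol_univ hb A
  rw [Fhat_eq_ncut_add]
  gcongr ncut w b A + ?_
  calc 4 * γ / gvol b univ = 2 * γ / (gvol b univ / 2) := by ring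
    _ ≤ 2 * γ / bal b A := div_le_div_of_nonneg_left (by positivity) hbal hhalf
    _ ≤ γ * (Mhat qm A + Nhat qc A) / bal b A := by
        rw [mul_comm 2 γ]
        exact div_le_div_of_nonneg_right (mul_le_mul_of_nonneg_left hP hγ) hbal.le

end Objective

theorem stmt_16_general {n : ℕ} (w : Fin n → Fin n → ℝ) (b : Fin n → ℝ)
    (qm qc : Fin n → Fin n → ℝ)
    (hb : ∀ i, 0 < b i)
    (hqm01 : ∀ i j, qm i j = 0 ∨ qm i j = 1)
    (hqc01 : ∀ i j, qc i j = 0 ∨ qc i j = 1) (hqc_symm : ∀ i j, qc i j = qc j i)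
    (hconn : ∀ C : Finset (Fin n), C ≠ ∅ → C ≠ Finset.univ → 0 < cutW w C)
    (C : Finset (Fin n)) (hC₁ : C ≠ ∅) (hC₂ : C ≠ Finset.univ)
    (hcons : Mhat qm C = 0 ∧ Nhat qc C = 0)
    (γ : ℝ) (hγ : gvol b Finset.univ * ncut w b C / 4 < γ)
    (A : Finset (Fin n)) (hA₁ : A ≠ ∅) (hA₂ : A ≠ Finset.univ)
    (hA : Fhat w b qm qc γ A ≤ ncut w b C) :
    (Mhat qm A = 0 ∧ Nhat qc A = 0) ∧ Fhat w b qm qc γ A = ncut w b A := by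
  have hbalA := bal_pos hb hA₁ hA₂
  have hV : 0 < gvol b univ := gvol_pos hb (nonempty_iff_ne_empty.2 hA₁ |>.mono (subset_univ A))
  have hncutC : 0 < ncut w b C := div_pos (hconn C hC₁ hC₂) (bal_pos hb hC₁ hC₂)
  have hncutC_lt : ncut w b C < 4 * γ / gvol b univ := by rw [lt_div_iff₀ hV]; linarith
  have hP : Mhat qm A + Nhat qc A = 0 := by
    refine (Mhat_add_Nhat_eq_zero_or_two_le hqm01 hqc01 hqc_symm
      (diag_eq_zero_of_Nhat_eq_zero hqc01 hcons.2) A).resolve_right fun hP => ?_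
    have hγ₀ : 0 ≤ γ := by linarith [mul_pos hV hncutC]
    have hncutA : 0 < ncut w b A := div_pos (hconn A hA₁ hA₂) hbalA
    linarith [ncut_add_le_Fhat (w := w) (fun i => (hb i).le) hbalA hγ₀ hP]
  have hMN := (add_eq_zero_iff_of_nonneg (Mhat_nonneg hqm01 A) (Nhat_nonneg hqc01 A)).1 hP
  exact ⟨hMN, by rw [Fhat_eq_ncut_add, hP, mul_zero, zero_div, add_zero]⟩

/-- If (C,C̄) is consistent with λ = NCut(C,C̄) and γ > gvol(V)·λ/4, then any nontrivial
A with F̂_γ(A) ≤ λ is consistent and F̂_γ(A) = NCut(A,Ā). -/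
theorem stmt_16 {n : ℕ} (w : Fin n → Fin n → ℝ) (b : Fin n → ℝ)
    (qm qc : Fin n → Fin n → ℝ)
    (hw_symm : ∀ i j, w i j = w j i) (hw_nonneg : ∀ i j, 0 ≤ w i j)
    (hb : ∀ i, 0 < b i)
    (hqm01 : ∀ i j, qm i j = 0 ∨ qm i j = 1) (hqm_symm : ∀ i j, qm i j = qm j i)
    (hqc01 : ∀ i j, qc i j = 0 ∨ qc i j = 1) (hqc_symm : ∀ i j, qc i j = qc j i)
    (hconn : ∀ C : Finset (Fin n), C ≠ ∅ → C ≠ Finset.univ → 0 < cutW w C)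
    (C : Finset (Fin n)) (hC₁ : C ≠ ∅) (hC₂ : C ≠ Finset.univ)
    (hcons : Mhat qm C = 0 ∧ Nhat qc C = 0)
    (γ : ℝ) (hγ : gvol b Finset.univ * ncut w b C / 4 < γ)
    (A : Finset (Fin n)) (hA₁ : A ≠ ∅) (hA₂ : A ≠ Finset.univ)
    (hA : Fhat w b qm qc γ A ≤ ncut w b C) :
    (Mhat qm A = 0 ∧ Nhat qc A = 0) ∧ Fhat w b qm qc γ A = ncut w b A :=
  stmt_16_general w b qm qc hb hqm01 hqc01 hqc_symm hconn C hC₁ hC₂ hcons γ hγ A hA₁ hA₂ hA
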